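/- arXiv:2604.27205 — 4 statements merged into one kernel-verified Lean document; each statement's English description precedes it below -/
import Mathlib

section
/- The distribution π̃ on S defined by π̃((ε,j)) = π(j)/2 is a stationary distribution of the Diaconis–Holmes–Neal sampler: for every state s ∈ S, Σ_{s'∈S} π̃(s')·P(s',s) = π̃(s), where P(s',s) denotes the one-step transition probability. -/
open scoped Classical

/-- One-step transition probability of the Diaconis–Holmes–Neal sampler on
`{+1,-1} × {1,…,n}` (a state `(ε, j)` is encoded as `(ε, j-1) : Bool × Fin n`,
with `true` standing for `+1`).  `m` is the (unnormalized) unimodal sequence,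
with `m 0 = m (n+1) = 0`, and `θ = 1/n`. -/
noncomputable def dhnP (n : ℕ) (m : ℕ → ℝ) (s t : Bool × Fin n) : ℝ :=
  let θ : ℝ := 1 / n
  let j : ℕ := (s.2 : ℕ) + 1
  let jn : ℕ := if s.1 then j + 1 else j - 1
  let r : ℝ := min 1 (m jn / m j)
  (if t.1 = s.1 ∧ (t.2 : ℕ) + 1 = jn then (1 - θ) * r else 0) +
  (if t.1 ≠ s.1 ∧ t.2 = s.2 then (1 - θ) * (1 - r) else 0) +
  (if t.1 ≠ s.1 ∧ (t.2 : ℕ) + 1 = jn then θ * r else 0) +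
  (if t.1 = s.1 ∧ t.2 = s.2 then θ * (1 - r) else 0)

private lemma dhn_mul_min_one_div (a b : ℝ) (hb : 0 < b) : b * min 1 (a / b) = min b a := by
  rw [mul_min_of_nonneg _ _ hb.le, mul_one, mul_div_cancel₀ _ hb.ne']

private lemma dhn_fin_sum_ite_shift (n d c : ℕ) (f : ℕ → ℝ) :
    ∑ i : Fin n, (if c = (i : ℕ) + d then f (i : ℕ) else 0)
      = if d ≤ c ∧ c - d < n then f (c - d) else 0 := by
  by_cases H : d ≤ c ∧ c - d < n
  · rw [if_pos H]
    rw [Finset.sum_eq_single_of_mem (⟨c - d, H.2⟩ : Fin n) (Finset.mem_univ _)]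
    · simp only [Fin.val_mk]
      rw [if_pos (by omega)]
    · intro b _ hb
      rw [if_neg]
      intro hc
      exact hb (Fin.ext (by simp only [Fin.val_mk]; omega))
  · rw [if_neg H]
    apply Finset.sum_eq_zero
    intro i _
    rw [if_neg]
    have := i.isLt
    omega

private lemma dhn_fin_sum_ite_eq0 (n c : ℕ) (f : ℕ → ℝ) :
    ∑ i : Fin n, (if c = (i : ℕ) then f (i : ℕ) else 0) = if c < n then f c else 0 := by
  have h := dhn_fin_sum_ite_shift n 0 c f
  simpa using h

private lemma dhn_key_true (n : ℕ) (hn : 3 ≤ n) (m : ℕ → ℝ) (hm0 : m 0 = 0)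
    (hmtop : m (n + 1) = 0) (hpos : ∀ j, 1 ≤ j → j ≤ n → 0 < m j) (k : Fin n) :
    ∑ s' : Bool × Fin n, m ((s'.2 : ℕ) + 1) * dhnP n m s' (true, k) = m ((k:ℕ)+1) := by
  rw [Fintype.sum_prod_type, Fintype.sum_bool]
  have h2' : ∀ a b : ℕ, (a = b + 1 + 1) = (a = b + 2) := fun a b => by
    apply propext; omega
  simp only [dhnP, ne_eq, Nat.add_sub_cancel, mul_add, mul_zero, mul_ite, if_true, if_false,
    true_and, not_true, false_and, Bool.true_eq_false, Bool.false_eq_true, not_false_iff,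
    and_true, ite_true, ite_false, true_iff, h2', Fin.ext_iff]
  simp only [Finset.sum_add_distrib, add_zero, zero_add, Finset.sum_const_zero]
  rw [dhn_fin_sum_ite_shift n 2 ((k:ℕ)+1) (fun i => m (i + 1) * ((1 - 1 / n) * (1 ⊓ m (i + 1 + 1) / m (i + 1)))),
      dhn_fin_sum_ite_eq0 n (k:ℕ) (fun i => m (i + 1) * (1 / n * (1 - 1 ⊓ m (i + 1 + 1) / m (i + 1)))),
      dhn_fin_sum_ite_eq0 n (k:ℕ) (fun i => m (i + 1) * ((1 - 1 / n) * (1 - 1 ⊓ m i / m (i + 1)))),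
      dhn_fin_sum_ite_eq0 n ((k:ℕ)+1) (fun i => m (i + 1) * (1 / n * (1 ⊓ m i / m (i + 1))))]
  have hk : (k:ℕ) < n := k.isLt
  have hb : 0 < m ((k:ℕ)+1) := hpos _ (by omega) (by omega)
  simp only [if_pos hk]
  rw [show (k:ℕ)+1+1 = (k:ℕ)+2 from by omega]
  set θ : ℝ := 1/(n:ℝ) with hθ
  have T1 : (if 2 ≤ (k:ℕ) + 1 ∧ (k:ℕ) + 1 - 2 < n then
        m ((k:ℕ) + 1 - 2 + 1) * ((1 - θ) * (1 ⊓ m ((k:ℕ) + 1 - 2 + 1 + 1) / m ((k:ℕ) + 1 - 2 + 1)))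
      else 0) = (1 - θ) * (m (k:ℕ) ⊓ m ((k:ℕ)+1)) := by
    by_cases h1 : 1 ≤ (k:ℕ)
    · rw [if_pos ⟨by omega, by omega⟩, show (k:ℕ)+1-2+1+1 = (k:ℕ)+1 from by omega,
        show (k:ℕ)+1-2+1 = (k:ℕ) from by omega]
      have h := dhn_mul_min_one_div (m ((k:ℕ)+1)) (m (k:ℕ)) (hpos _ h1 (by omega))
      linear_combination (1 - θ) * h
    · rw [if_neg (by omega), show (k:ℕ) = 0 from by omega, hm0,
        min_eq_left (hpos 1 le_rfl (by omega)).le, mul_zero]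
  have h2 := dhn_mul_min_one_div (m ((k:ℕ)+2)) (m ((k:ℕ)+1)) hb
  have h3 := dhn_mul_min_one_div (m (k:ℕ)) (m ((k:ℕ)+1)) hb
  have hc3 : m ((k:ℕ)+1) ⊓ m (k:ℕ) = m (k:ℕ) ⊓ m ((k:ℕ)+1) := min_comm _ _
  have T4 : (if (k:ℕ) + 1 < n then
        m ((k:ℕ) + 2) * (θ * (1 ⊓ m ((k:ℕ) + 1) / m ((k:ℕ) + 2))) else 0)
      = θ * (m ((k:ℕ)+1) ⊓ m ((k:ℕ)+2)) := by
    by_cases h4 : (k:ℕ) + 1 < n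
    · rw [if_pos h4]
      have h := dhn_mul_min_one_div (m ((k:ℕ)+1)) (m ((k:ℕ)+2)) (hpos _ (by omega) (by omega))
      have hc : m ((k:ℕ)+2) ⊓ m ((k:ℕ)+1) = m ((k:ℕ)+1) ⊓ m ((k:ℕ)+2) := min_comm _ _
      linear_combination θ * h + θ * hc
    · rw [if_neg h4, show (k:ℕ)+2 = n+1 from by omega, hmtop, min_eq_right hb.le, mul_zero]
  rw [T1, T4]
  linear_combination (-θ) * h2 - (1 - θ) * h3 - (1 - θ) * hc3

private lemma dhn_key_false (n : ℕ) (hn : 3 ≤ n) (m : ℕ → ℝ) (hm0 : m 0 = 0)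
    (hmtop : m (n + 1) = 0) (hpos : ∀ j, 1 ≤ j → j ≤ n → 0 < m j) (k : Fin n) :
    ∑ s' : Bool × Fin n, m ((s'.2 : ℕ) + 1) * dhnP n m s' (false, k) = m ((k:ℕ)+1) := by
  rw [Fintype.sum_prod_type, Fintype.sum_bool]
  have h2' : ∀ a b : ℕ, (a = b + 1 + 1) = (a = b + 2) := fun a b => by
    apply propext; omega
  simp only [dhnP, ne_eq, Nat.add_sub_cancel, mul_add, mul_zero, mul_ite, if_true, if_false,
    true_and, not_true, false_and, Bool.true_eq_false, Bool.false_eq_true, not_false_iff,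
    and_true, ite_true, ite_false, true_iff, h2', Fin.ext_iff]
  simp only [Finset.sum_add_distrib, add_zero, zero_add, Finset.sum_const_zero]
  rw [dhn_fin_sum_ite_eq0 n (k:ℕ) (fun i => m (i + 1) * ((1 - 1 / n) * (1 - 1 ⊓ m (i + 1 + 1) / m (i + 1)))),
      dhn_fin_sum_ite_shift n 2 ((k:ℕ)+1) (fun i => m (i + 1) * (1 / n * (1 ⊓ m (i + 1 + 1) / m (i + 1)))),
      dhn_fin_sum_ite_eq0 n ((k:ℕ)+1) (fun i => m (i + 1) * ((1 - 1 / n) * (1 ⊓ m i / m (i + 1)))),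
      dhn_fin_sum_ite_eq0 n (k:ℕ) (fun i => m (i + 1) * (1 / n * (1 - 1 ⊓ m i / m (i + 1))))]
  have hk : (k:ℕ) < n := k.isLt
  have hb : 0 < m ((k:ℕ)+1) := hpos _ (by omega) (by omega)
  simp only [if_pos hk]
  rw [show (k:ℕ)+1+1 = (k:ℕ)+2 from by omega]
  set θ : ℝ := 1/(n:ℝ) with hθ
  have T1 : (if 2 ≤ (k:ℕ) + 1 ∧ (k:ℕ) + 1 - 2 < n then
        m ((k:ℕ) + 1 - 2 + 1) * (θ * (1 ⊓ m ((k:ℕ) + 1 - 2 + 1 + 1) / m ((k:ℕ) + 1 - 2 + 1)))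
      else 0) = θ * (m (k:ℕ) ⊓ m ((k:ℕ)+1)) := by
    by_cases h1 : 1 ≤ (k:ℕ)
    · rw [if_pos ⟨by omega, by omega⟩, show (k:ℕ)+1-2+1+1 = (k:ℕ)+1 from by omega,
        show (k:ℕ)+1-2+1 = (k:ℕ) from by omega]
      have h := dhn_mul_min_one_div (m ((k:ℕ)+1)) (m (k:ℕ)) (hpos _ h1 (by omega))
      linear_combination θ * h
    · rw [if_neg (by omega), show (k:ℕ) = 0 from by omega, hm0,
        min_eq_left (hpos 1 le_rfl (by omega)).le, mul_zero]
  have h2 := dhn_mul_min_one_div (m ((k:ℕ)+2)) (m ((k:ℕ)+1)) hb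
  have h3 := dhn_mul_min_one_div (m (k:ℕ)) (m ((k:ℕ)+1)) hb
  have hc3 : m ((k:ℕ)+1) ⊓ m (k:ℕ) = m (k:ℕ) ⊓ m ((k:ℕ)+1) := min_comm _ _
  have T4 : (if (k:ℕ) + 1 < n then
        m ((k:ℕ) + 2) * ((1 - θ) * (1 ⊓ m ((k:ℕ) + 1) / m ((k:ℕ) + 2))) else 0)
      = (1 - θ) * (m ((k:ℕ)+1) ⊓ m ((k:ℕ)+2)) := by
    by_cases h4 : (k:ℕ) + 1 < n
    · rw [if_pos h4]
      have h := dhn_mul_min_one_div (m ((k:ℕ)+1)) (m ((k:ℕ)+2)) (hpos _ (by omega) (by omega))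
      have hc : m ((k:ℕ)+2) ⊓ m ((k:ℕ)+1) = m ((k:ℕ)+1) ⊓ m ((k:ℕ)+2) := min_comm _ _
      linear_combination (1 - θ) * h + (1 - θ) * hc
    · rw [if_neg h4, show (k:ℕ)+2 = n+1 from by omega, hmtop, min_eq_right hb.le, mul_zero]
  rw [T1, T4]
  linear_combination (-(1 - θ)) * h2 - θ * h3 - θ * hc3

/-- `π̃((ε,j)) = π(j)/2 = m(j)/(2z')` is a stationary distribution of the
Diaconis–Holmes–Neal sampler. -/
theorem dhn_stationary (n : ℕ) (hn : 3 ≤ n) (hodd : Odd n)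
    (m : ℕ → ℝ) (hm0 : m 0 = 0) (hmtop : m (n + 1) = 0)
    (hpos : ∀ j, 1 ≤ j → j ≤ n → 0 < m j)
    (jstar : ℕ) (hj1 : 1 ≤ jstar) (hj2 : jstar ≤ n)
    (hup : ∀ j, 1 ≤ j → j < jstar → m j ≤ m (j + 1))
    (hdown : ∀ j, jstar ≤ j → j < n → m (j + 1) ≤ m j) :
    ∀ s : Bool × Fin n,
      ∑ s' : Bool × Fin n,
          (m ((s'.2 : ℕ) + 1) / (2 * ∑ j ∈ Finset.Icc 1 n, m j)) * dhnP n m s' s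
        = m ((s.2 : ℕ) + 1) / (2 * ∑ j ∈ Finset.Icc 1 n, m j) := by
  rintro ⟨ε, k⟩
  have key : ∑ s' : Bool × Fin n, m ((s'.2 : ℕ) + 1) * dhnP n m s' (ε, k) = m ((k:ℕ)+1) := by
    cases ε
    · exact dhn_key_false n hn m hm0 hmtop hpos k
    · exact dhn_key_true n hn m hm0 hmtop hpos k
  simp only [div_mul_eq_mul_div]
  rw [← Finset.sum_div, key]
end

section
/- The Diaconis–Holmes–Neal sampler with unimodal underlying probabilities is irreducible: for all states s, s' ∈ S there exists k ≥ 1 such that the k-step transition probability P^k(s,s') is strictly positive. -/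
open scoped Classical

/-- The DHN transition matrix; `(dhnM n m ^ k) s s'` is the `k`-step transition
probability from `s` to `s'`. -/
noncomputable def dhnM (n : ℕ) (m : ℕ → ℝ) : Matrix (Bool × Fin n) (Bool × Fin n) ℝ :=
  Matrix.of fun s t => dhnP n m s t

lemma matpow_nonneg {N : Type*} [Fintype N] [DecidableEq N] (M : Matrix N N ℝ)
    (h0 : ∀ a b, 0 ≤ M a b) (k : ℕ) : ∀ a b, 0 ≤ (M ^ k) a b := by
  induction k with
  | zero =>
    intro a b
    rw [pow_zero]
    by_cases h : a = b <;> simp [Matrix.one_apply, h]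
  | succ k ih =>
    intro a b
    rw [pow_succ, Matrix.mul_apply]
    exact Finset.sum_nonneg fun i _ => mul_nonneg (ih a i) (h0 i b)

lemma matpow_pos_step {N : Type*} [Fintype N] [DecidableEq N] (M : Matrix N N ℝ)
    (h0 : ∀ a b, 0 ≤ M a b) {k : ℕ} {a b c : N}
    (h1 : 0 < (M ^ k) a b) (h2 : 0 < M b c) : 0 < (M ^ (k + 1)) a c := by
  rw [pow_succ, Matrix.mul_apply]
  refine Finset.sum_pos' (fun i _ => mul_nonneg (matpow_nonneg M h0 k a i) (h0 i c)) ?_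
  exact ⟨b, Finset.mem_univ b, mul_pos h1 h2⟩

/-- The Hamiltonian cycle on the DHN state space. -/
def gstate (n : ℕ) (hn : 0 < n) (k : ℕ) : Bool × Fin n :=
  if h : k < n then (true, ⟨k, h⟩) else (false, ⟨(2*n-1-k) % n, Nat.mod_lt _ hn⟩)

set_option maxHeartbeats 1000000 in
/-- the DHN sampler with unimodal underlying probabilities is irreducible. -/
theorem dhn_irreducible (n : ℕ) (hn : 3 ≤ n) (hodd : Odd n)
    (m : ℕ → ℝ) (hm0 : m 0 = 0) (hmtop : m (n + 1) = 0)
    (hpos : ∀ j, 1 ≤ j → j ≤ n → 0 < m j)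
    (jstar : ℕ) (hj1 : 1 ≤ jstar) (hj2 : jstar ≤ n)
    (hup : ∀ j, 1 ≤ j → j < jstar → m j ≤ m (j + 1))
    (hdown : ∀ j, jstar ≤ j → j < n → m (j + 1) ≤ m j) :
    ∀ s s' : Bool × Fin n, ∃ k : ℕ, 1 ≤ k ∧ 0 < ((dhnM n m) ^ k) s s' := by
  have hn0 : 0 < n := by omega
  have hnR : (1:ℝ) < n := by exact_mod_cast (by omega : 1 < n)
  have hθ : 0 < 1 - ((n:ℝ))⁻¹ := by
    have h1 : ((n:ℝ))⁻¹ < 1 := inv_lt_one_of_one_lt₀ hnR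
    linarith
  -- nonnegativity of entries
  have hnonneg : ∀ s t : Bool × Fin n, 0 ≤ dhnM n m s t := by
    intro s t
    simp only [dhnM, Matrix.of_apply, dhnP]
    have hj1' : 1 ≤ (s.2 : ℕ) + 1 := by omega
    have hj2' : (s.2 : ℕ) + 1 ≤ n := s.2.isLt
    have hmj : 0 < m ((s.2 : ℕ) + 1) := hpos _ hj1' hj2'
    have hjn : 0 ≤ m (if s.1 then (s.2:ℕ)+1+1 else (s.2:ℕ)+1-1) := by
      have hcases : (if s.1 then (s.2:ℕ)+1+1 else (s.2:ℕ)+1-1) = 0 ∨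
          (if s.1 then (s.2:ℕ)+1+1 else (s.2:ℕ)+1-1) = n+1 ∨
          (1 ≤ (if s.1 then (s.2:ℕ)+1+1 else (s.2:ℕ)+1-1) ∧
            (if s.1 then (s.2:ℕ)+1+1 else (s.2:ℕ)+1-1) ≤ n) := by
        cases hs : s.1 <;> simp only [hs, if_true, if_false, Bool.false_eq_true, Bool.true_eq_false] <;> omega
      rcases hcases with h | h | ⟨h1, h2⟩
      · rw [h, hm0]
      · rw [h, hmtop]
      · exact (hpos _ h1 h2).le
    set r := min 1 (m (if s.1 then (s.2:ℕ)+1+1 else (s.2:ℕ)+1-1) / m ((s.2:ℕ)+1)) with hrdef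
    have hr0 : 0 ≤ r := le_min zero_le_one (div_nonneg hjn hmj.le)
    have hr1 : r ≤ 1 := min_le_left _ _
    have hθ0 : 0 ≤ 1/(n:ℝ) := by positivity
    have hθ1 : 1/(n:ℝ) ≤ 1 := by
      rw [div_le_one (by linarith)]; linarith
    have t1 : 0 ≤ (1 - 1/(n:ℝ)) * r := mul_nonneg (by linarith) hr0
    have t2 : 0 ≤ (1 - 1/(n:ℝ)) * (1 - r) := mul_nonneg (by linarith) (by linarith)
    have t3 : 0 ≤ 1/(n:ℝ) * r := mul_nonneg hθ0 hr0
    have t4 : 0 ≤ 1/(n:ℝ) * (1 - r) := mul_nonneg hθ0 (by linarith)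
    split_ifs <;> linarith
  -- positive ratio in the interior
  have hrpos : ∀ a b : ℕ, 1 ≤ a → a ≤ n → 1 ≤ b → b ≤ n →
      0 < min 1 (m a / m b) :=
    fun a b h1 h2 h3 h4 => lt_min one_pos (div_pos (hpos a h1 h2) (hpos b h3 h4))
  -- the four move lemmas
  have moveUp : ∀ (a : ℕ) (h : a + 1 < n),
      0 < dhnM n m (true, ⟨a, by omega⟩) (true, ⟨a+1, h⟩) := by
    intro a h
    show 0 < dhnP n m _ _
    simp only [dhnP, Fin.mk.injEq]
    norm_num
    exact mul_pos hθ (hrpos _ _ (by omega) (by omega) (by omega) (by omega))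
  have moveTop : 0 < dhnM n m (true, ⟨n-1, by omega⟩) (false, ⟨n-1, by omega⟩) := by
    show 0 < dhnP n m _ _
    simp only [dhnP, Fin.mk.injEq]
    norm_num
    rw [show (n-1+1 : ℕ) = n by omega, hmtop, zero_div, min_eq_right zero_le_one]
    linarith
  have moveDown : ∀ (a : ℕ) (h : a + 1 < n),
      0 < dhnM n m (false, ⟨a+1, h⟩) (false, ⟨a, by omega⟩) := by
    intro a h
    show 0 < dhnP n m _ _
    simp only [dhnP, Fin.mk.injEq]
    norm_num
    exact mul_pos hθ (hrpos _ _ (by omega) (by omega) (by omega) (by omega))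
  have moveBot : 0 < dhnM n m (false, ⟨0, by omega⟩) (true, ⟨0, by omega⟩) := by
    show 0 < dhnP n m _ _
    simp only [dhnP, Fin.mk.injEq]
    norm_num
    rw [hm0, zero_div, min_eq_right zero_le_one]
    linarith
  -- one step around the Hamiltonian cycle
  have hstep : ∀ k, k < 2*n →
      0 < dhnM n m (gstate n hn0 k) (gstate n hn0 ((k+1) % (2*n))) := by
    intro k hk
    rcases lt_or_ge (k+1) n with h1 | h1
    · -- shift up
      have e1 : gstate n hn0 k = (true, ⟨k, by omega⟩) := by
        simp [gstate, (by omega : k < n)]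
      have e2 : gstate n hn0 ((k+1) % (2*n)) = (true, ⟨k+1, h1⟩) := by
        rw [Nat.mod_eq_of_lt (by omega)]; simp [gstate, h1]
      rw [e1, e2]; exact moveUp k h1
    · rcases lt_or_ge (k+1) (n+1) with h2 | h2
      · -- k = n - 1 : jump at the top
        have e1 : gstate n hn0 k = (true, ⟨n-1, by omega⟩) := by
          rw [gstate, dif_pos (by omega : k < n)]
          simp [show k = n-1 by omega]
        have e2 : gstate n hn0 ((k+1) % (2*n)) = (false, ⟨n-1, by omega⟩) := by
          rw [Nat.mod_eq_of_lt (by omega), gstate, dif_neg (by omega)]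
          refine Prod.ext rfl (Fin.ext ?_)
          show (2*n-1-(k+1)) % n = n-1
          rw [show 2*n-1-(k+1) = n-1 by omega]
          exact Nat.mod_eq_of_lt (by omega)
        rw [e1, e2]; exact moveTop
      · rcases lt_or_ge (k+1) (2*n) with h3 | h3
        · -- shift down
          have e1 : gstate n hn0 k = (false, ⟨(2*n-2-k)+1, by omega⟩) := by
            rw [gstate, dif_neg (by omega)]
            refine Prod.ext rfl (Fin.ext ?_)
            show (2*n-1-k) % n = (2*n-2-k)+1
            rw [Nat.mod_eq_of_lt (by omega)]; omega
          have e2 : gstate n hn0 ((k+1) % (2*n)) = (false, ⟨2*n-2-k, by omega⟩) := by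
            rw [Nat.mod_eq_of_lt h3, gstate, dif_neg (by omega)]
            refine Prod.ext rfl (Fin.ext ?_)
            show (2*n-1-(k+1)) % n = 2*n-2-k
            rw [show 2*n-1-(k+1) = 2*n-2-k by omega]
            exact Nat.mod_eq_of_lt (by omega)
          rw [e1, e2]; exact moveDown _ (by omega)
        · -- k = 2n-1 : jump at the bottom
          have e1 : gstate n hn0 k = (false, ⟨0, by omega⟩) := by
            rw [gstate, dif_neg (by omega)]
            refine Prod.ext rfl (Fin.ext ?_)
            show (2*n-1-k) % n = 0
            rw [show 2*n-1-k = 0 by omega, Nat.zero_mod]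
          have e2 : gstate n hn0 ((k+1) % (2*n)) = (true, ⟨0, by omega⟩) := by
            have h : (k+1) % (2*n) = 0 := by
              rw [show k+1 = 2*n by omega, Nat.mod_self]
            rw [h]
            simp [gstate, hn0]
          rw [e1, e2]; exact moveBot
  -- iterate around the cycle
  have hreach : ∀ d a, a < 2*n →
      0 < ((dhnM n m) ^ (d+1)) (gstate n hn0 a) (gstate n hn0 ((a+d+1) % (2*n))) := by
    intro d
    induction d with
    | zero =>
      intro a ha
      rw [pow_one]
      exact hstep a ha
    | succ d ih =>
      intro a ha
      have h1 := ih a ha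
      have hlt : (a+d+1) % (2*n) < 2*n := Nat.mod_lt _ (by omega)
      have h2 := hstep _ hlt
      have e : ((a+d+1) % (2*n) + 1) % (2*n) = (a+(d+1)+1) % (2*n) := by
        rw [Nat.mod_add_mod, show a+d+1+1 = a+(d+1)+1 by omega]
      rw [e] at h2
      exact matpow_pos_step _ hnonneg h1 h2
  -- conclude
  intro s s'
  have hidx : ∀ t : Bool × Fin n, ∃ a, a < 2*n ∧ gstate n hn0 a = t := by
    intro t
    rcases t with ⟨ε, i⟩
    cases ε
    · refine ⟨2*n-1-(i:ℕ), by omega, ?_⟩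
      rw [gstate, dif_neg (by omega)]
      refine Prod.ext rfl (Fin.ext ?_)
      show (2*n-1-(2*n-1-(i:ℕ))) % n = (i:ℕ)
      rw [show 2*n-1-(2*n-1-(i:ℕ)) = (i:ℕ) by have := i.isLt; omega]
      exact Nat.mod_eq_of_lt i.isLt
    · exact ⟨(i:ℕ), by have := i.isLt; omega, by simp [gstate, i.isLt]⟩
  obtain ⟨a, ha, rfl⟩ := hidx s
  obtain ⟨b, hb, rfl⟩ := hidx s'
  refine ⟨b + 2*n - a, by omega, ?_⟩
  have hd : b + 2*n - a = (b + 2*n - a - 1) + 1 := by omega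
  have hfin := hreach (b + 2*n - a - 1) a ha
  have e : (a + (b + 2*n - a - 1) + 1) % (2*n) = b := by
    rw [show a + (b + 2*n - a - 1) + 1 = b + 2*n by omega]
    rw [Nat.add_mod_right, Nat.mod_eq_of_lt hb]
  rw [e] at hfin
  rw [hd]
  exact hfin
end

section
/- There exists a constant c > 0, independent of n and of the sequence m, such that for every odd n ≥ 3, every positive unimodal sequence m, and every pair of states y, j' ∈ S, there is an ideal path from y to j': a sequence of states y = w_0, w_1, …, w_{⌊cn⌋} = j' in which every consecutive one-step transition probability P(w_i, w_{i+1}) is strictly positive; equivalently, P^{⌊cn⌋}(y, j') > 0. -/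
open scoped Classical

/-- The deterministic "cycle" successor on states: go up on the `true` side,
jump across at the top, go down on the `false` side, jump across at the bottom. -/
def nextS (n : ℕ) (s : Bool × Fin n) : Bool × Fin n :=
  if s.1 then
    (if h : (s.2 : ℕ) + 1 < n then (true, ⟨(s.2 : ℕ) + 1, h⟩) else (false, s.2))
  else
    (if 0 < (s.2 : ℕ) then (false, ⟨(s.2 : ℕ) - 1, by have := s.2.isLt; omega⟩)
     else (true, s.2))

/-- State at position `p` along the cycle. -/
def idxS (n : ℕ) (hn : 0 < n) (p : ℕ) : Bool × Fin n :=
  if h : p % (2 * n) < n then (true, ⟨p % (2 * n), h⟩)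
  else (false, ⟨2 * n - 1 - p % (2 * n),
    by have := Nat.mod_lt p (show 0 < 2 * n by omega); omega⟩)

/-- Position of a state along the cycle. -/
def posS (n : ℕ) (s : Bool × Fin n) : ℕ :=
  if s.1 then (s.2 : ℕ) else 2 * n - 1 - (s.2 : ℕ)

lemma posS_lt (n : ℕ) (s : Bool × Fin n) : posS n s < 2 * n := by
  obtain ⟨b, i⟩ := s
  have := i.isLt
  cases b <;> simp [posS] <;> omega

lemma idxS_congr (n : ℕ) (hn : 0 < n) {p v : ℕ} (h : p % (2 * n) = v % (2 * n)) :
    idxS n hn p = idxS n hn v := by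
  simp only [idxS, h]

lemma idxS_eval_lt (n : ℕ) (hn : 0 < n) {v : ℕ} (h : v < n) :
    idxS n hn v = (true, ⟨v, h⟩) := by
  have hm : v % (2 * n) = v := Nat.mod_eq_of_lt (by omega)
  simp only [idxS, hm, dif_pos h]

lemma idxS_eval_ge (n : ℕ) (hn : 0 < n) {v : ℕ} (h1 : n ≤ v) (h2 : v < 2 * n) :
    idxS n hn v = (false, ⟨2 * n - 1 - v, by omega⟩) := by
  have hm : v % (2 * n) = v := Nat.mod_eq_of_lt h2
  simp only [idxS, hm, dif_neg (by omega : ¬ v < n)]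

lemma idxS_posS (n : ℕ) (hn : 0 < n) (s : Bool × Fin n) : idxS n hn (posS n s) = s := by
  obtain ⟨b, i⟩ := s
  have hi := i.isLt
  cases b
  · have h1 : posS n (false, i) = 2 * n - 1 - (i : ℕ) := by simp [posS]
    rw [h1, idxS_eval_ge n hn (by omega) (by omega)]
    exact Prod.ext rfl (Fin.ext (by simp; omega))
  · have h1 : posS n (true, i) = (i : ℕ) := by simp [posS]
    rw [h1, idxS_eval_lt n hn hi]

lemma idxS_period (n : ℕ) (hn : 0 < n) (p : ℕ) :
    idxS n hn (p + 2 * n) = idxS n hn p := by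
  simp [idxS, Nat.add_mod_right]

lemma nextS_true_lt (n : ℕ) {i : ℕ} {hi : i < n} (h : i + 1 < n) :
    nextS n (true, ⟨i, hi⟩) = (true, ⟨i + 1, h⟩) := by
  rw [nextS]; simp [h]

lemma nextS_true_top (n : ℕ) {i : ℕ} {hi : i < n} (h : ¬ i + 1 < n) :
    nextS n (true, ⟨i, hi⟩) = (false, ⟨i, hi⟩) := by
  rw [nextS]; simp [h]

lemma nextS_false_pos (n : ℕ) {i : ℕ} {hi : i < n} (h : 0 < i) :
    nextS n (false, ⟨i, hi⟩) = (false, ⟨i - 1, by omega⟩) := by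
  rw [nextS]; simp [h]

lemma nextS_false_zero (n : ℕ) {i : ℕ} {hi : i < n} (h : i = 0) :
    nextS n (false, ⟨i, hi⟩) = (true, ⟨i, hi⟩) := by
  rw [nextS]; simp [h]

lemma nextS_idxS (n : ℕ) (hn : 0 < n) (p : ℕ) :
    nextS n (idxS n hn p) = idxS n hn (p + 1) := by
  have hq : p % (2 * n) < 2 * n := Nat.mod_lt p (by omega)
  have hq1 : (p + 1) % (2 * n) = (p % (2 * n) + 1) % (2 * n) := by
    conv_lhs => rw [Nat.add_mod]
    rw [Nat.one_mod_eq_one.mpr (by omega)]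
  have e0 : idxS n hn p = idxS n hn (p % (2 * n)) :=
    idxS_congr n hn (by rw [Nat.mod_eq_of_lt hq])
  have e1 : idxS n hn (p + 1) = idxS n hn (p % (2 * n) + 1) := idxS_congr n hn hq1
  set q := p % (2 * n) with hqd
  clear_value q
  rw [e0, e1]
  rcases lt_trichotomy (q + 1) n with h1 | h1 | h1
  · rw [idxS_eval_lt n hn (by omega : q < n), nextS_true_lt n h1,
      idxS_eval_lt n hn h1]
  · rw [idxS_eval_lt n hn (by omega : q < n), nextS_true_top n (by omega),
      idxS_eval_ge n hn (by omega) (by omega)]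
    exact Prod.ext rfl (Fin.ext (by simp; omega))
  · rcases eq_or_lt_of_le (show q + 1 ≤ 2 * n by omega) with h2 | h2
    · rw [idxS_eval_ge n hn (by omega) (by omega),
        nextS_false_zero n (by omega : 2 * n - 1 - q = 0)]
      rw [idxS_congr n hn (show (q + 1) % (2 * n) = 0 % (2 * n) by rw [h2]; simp),
        idxS_eval_lt n hn hn]
      exact Prod.ext rfl (Fin.ext (by simp; omega))
    · rw [idxS_eval_ge n hn (by omega) (by omega),
        nextS_false_pos n (by omega : 0 < 2 * n - 1 - q),
        idxS_eval_ge n hn (by omega) (by omega)]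
      exact Prod.ext rfl (Fin.ext (by simp; omega))

lemma iter_nextS (n : ℕ) (hn : 0 < n) (p d : ℕ) :
    (nextS n)^[d] (idxS n hn p) = idxS n hn (p + d) := by
  induction d with
  | zero => rfl
  | succ d ih =>
      rw [Function.iterate_succ_apply', ih, nextS_idxS, ← Nat.add_assoc]

section MatrixLemmas

variable {S : Type*} [Fintype S] [DecidableEq S]

lemma pow_apply_nonneg (M : Matrix S S ℝ) (h : ∀ a b, 0 ≤ M a b) :
    ∀ (k : ℕ) (a b : S), 0 ≤ (M ^ k) a b := by
  intro k
  induction k with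
  | zero =>
      intro a b
      simp only [pow_zero, Matrix.one_apply]
      split_ifs <;> norm_num
  | succ k ih =>
      intro a b
      rw [pow_succ, Matrix.mul_apply]
      exact Finset.sum_nonneg fun c _ => mul_nonneg (ih a c) (h c b)

lemma pow_apply_mul_le (M : Matrix S S ℝ) (h : ∀ a b, 0 ≤ M a b)
    (a b : ℕ) (x y z : S) :
    (M ^ a) x y * (M ^ b) y z ≤ (M ^ (a + b)) x z := by
  rw [pow_add, Matrix.mul_apply]
  exact Finset.single_le_sum
    (f := fun c => (M ^ a) x c * (M ^ b) c z)
    (fun c _ => mul_nonneg (pow_apply_nonneg M h a x c) (pow_apply_nonneg M h b c z))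
    (Finset.mem_univ y)

end MatrixLemmas

lemma dhnP_nonneg (n : ℕ) (hn : 3 ≤ n) (m : ℕ → ℝ)
    (h0 : m 0 = 0) (hn1 : m (n + 1) = 0)
    (hpos : ∀ j, 1 ≤ j → j ≤ n → 0 < m j) (s t : Bool × Fin n) :
    0 ≤ dhnP n m s t := by
  have hm : ∀ jj, jj ≤ n + 1 → 0 ≤ m jj := by
    intro jj hjj
    rcases Nat.eq_zero_or_pos jj with h | h
    · rw [h, h0]
    · rcases eq_or_lt_of_le hjj with h' | h'
      · rw [h', hn1]
      · exact le_of_lt (hpos jj h (by omega))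
  have hs := s.2.isLt
  have hθ0 : (0:ℝ) ≤ 1 / n := by positivity
  have hθ1 : (1:ℝ) / n ≤ 1 := by
    rw [div_le_one (by exact_mod_cast (by omega : 0 < n))]
    exact_mod_cast (by omega : 1 ≤ n)
  set j : ℕ := (s.2 : ℕ) + 1 with hj
  set jn : ℕ := if s.1 then j + 1 else j - 1 with hjn
  have hmj : 0 < m j := hpos j (by omega) (by omega)
  have hmjn : 0 ≤ m jn := by
    apply hm
    rw [hjn]
    split_ifs <;> omega
  have hr0 : (0:ℝ) ≤ min 1 (m jn / m j) := le_min (by norm_num) (div_nonneg hmjn hmj.le)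
  have hr1 : min 1 (m jn / m j) ≤ 1 := min_le_left _ _
  set r : ℝ := min 1 (m jn / m j) with hr
  have p1 : (0:ℝ) ≤ (1 - 1/n) * r := mul_nonneg (by linarith) hr0
  have p2 : (0:ℝ) ≤ (1 - 1/n) * (1 - r) := mul_nonneg (by linarith) (by linarith)
  have p3 : (0:ℝ) ≤ (1/n) * r := mul_nonneg hθ0 hr0
  have p4 : (0:ℝ) ≤ (1/n) * (1 - r) := mul_nonneg hθ0 (by linarith)
  rw [dhnP]
  simp only [← hj, ← hjn, ← hr]
  split_ifs <;> linarith

lemma one_sub_inv_pos (n : ℕ) (hn : 3 ≤ n) : (0:ℝ) < 1 - (n:ℝ)⁻¹ := by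
  have h1 : (3:ℝ) ≤ n := by exact_mod_cast hn
  have h2 : (n:ℝ)⁻¹ ≤ 3⁻¹ := by
    apply inv_anti₀ <;> norm_num <;> linarith
  norm_num at h2 ⊢
  linarith

lemma dhnP_step_pos (n : ℕ) (hn : 3 ≤ n) (m : ℕ → ℝ)
    (h0 : m 0 = 0) (hn1 : m (n + 1) = 0)
    (hpos : ∀ j, 1 ≤ j → j ≤ n → 0 < m j) (s : Bool × Fin n) :
    0 < dhnP n m s (nextS n s) := by
  have h1θ : (0:ℝ) < 1 - (n:ℝ)⁻¹ := one_sub_inv_pos n hn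
  obtain ⟨b, i, hi⟩ := s
  cases b
  · rcases Nat.eq_zero_or_pos i with h | h
    · -- bottom jump : (false, 0) → (true, 0)
      rw [nextS_false_zero n h]
      have hval : dhnP n m (false, ⟨i, hi⟩) (true, ⟨i, hi⟩) = 1 - (n:ℝ)⁻¹ := by
        simp [dhnP, h, h0]
      rw [hval]; exact h1θ
    · -- down shift : (false, i) → (false, i-1)
      rw [nextS_false_pos n h]
      have hval : dhnP n m (false, ⟨i, hi⟩) (false, ⟨i - 1, by omega⟩)
          = (1 - (n:ℝ)⁻¹) * min 1 (m i / m (i + 1)) := by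
        simp [dhnP, Fin.ext_iff, show i - 1 + 1 = i by omega, show i - 1 ≠ i by omega]
      rw [hval]
      exact mul_pos h1θ (lt_min one_pos
        (div_pos (hpos i (by omega) (by omega)) (hpos (i+1) (by omega) (by omega))))
  · by_cases h : i + 1 < n
    · -- up shift : (true, i) → (true, i+1)
      rw [nextS_true_lt n h]
      have hval : dhnP n m (true, ⟨i, hi⟩) (true, ⟨i + 1, h⟩)
          = (1 - (n:ℝ)⁻¹) * min 1 (m (i + 1 + 1) / m (i + 1)) := by
        simp [dhnP, Fin.ext_iff]
      rw [hval]
      exact mul_pos h1θ (lt_min one_pos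
        (div_pos (hpos (i+2) (by omega) (by omega)) (hpos (i+1) (by omega) (by omega))))
    · -- top jump : (true, n-1) → (false, n-1)
      rw [nextS_true_top n h]
      have hval : dhnP n m (true, ⟨i, hi⟩) (false, ⟨i, hi⟩) = 1 - (n:ℝ)⁻¹ := by
        simp [dhnP, Fin.ext_iff, show ¬ (i + 1 = i + 1 + 1) by omega,
          show i + 1 + 1 = n + 1 by omega, hn1]
      rw [hval]; exact h1θ

lemma dhnP_stay_pos (n : ℕ) (hn : 3 ≤ n) (m : ℕ → ℝ)
    (h0 : m 0 = 0) (hn1 : m (n + 1) = 0)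
    (hpos : ∀ j, 1 ≤ j → j ≤ n → 0 < m j) :
    0 < dhnP n m (true, ⟨n - 1, by omega⟩) (true, ⟨n - 1, by omega⟩) := by
  have hval : dhnP n m (true, ⟨n - 1, by omega⟩) (true, ⟨n - 1, by omega⟩) = (n:ℝ)⁻¹ := by
    simp [dhnP, Fin.ext_iff, show ¬ (n - 1 + 1 = n - 1 + 1 + 1) by omega,
      show n - 1 + 1 + 1 = n + 1 by omega, hn1]
  rw [hval]
  have : (0:ℝ) < n := by exact_mod_cast (by omega : 0 < n)
  positivity

/-- there is a universal constant `c > 0` (independent of `n` and `m`) such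
that for every odd `n ≥ 3`, every positive unimodal sequence `m` (vanishing at `0` and
`n+1`), and all states `y, j'`, there is an ideal path of length `⌊cn⌋` from `y` to `j'`;
equivalently the `⌊cn⌋`-step transition probability is positive. -/
theorem dhn_ideal_path_exists :
    ∃ c : ℝ, 0 < c ∧
      ∀ n : ℕ, 3 ≤ n → Odd n →
      ∀ m : ℕ → ℝ, m 0 = 0 → m (n + 1) = 0 →
        (∀ j, 1 ≤ j → j ≤ n → 0 < m j) →
        (∃ jstar, 1 ≤ jstar ∧ jstar ≤ n ∧
          (∀ j, 1 ≤ j → j < jstar → m j ≤ m (j + 1)) ∧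
          (∀ j, jstar ≤ j → j < n → m (j + 1) ≤ m j)) →
      ∀ y j' : Bool × Fin n,
        0 < ((dhnM n m) ^ (Nat.floor (c * n))) y j' := by
  refine ⟨7, by norm_num, ?_⟩
  intro n hn3 _ m h0 hn1 hpos _ y j'
  have hn0 : 0 < n := by omega
  have hk : Nat.floor ((7:ℝ) * n) = 7 * n := by
    rw [show ((7:ℝ) * n) = ((7 * n : ℕ) : ℝ) by push_cast; ring, Nat.floor_natCast]
  rw [hk]
  set M := dhnM n m with hM
  have hnn : ∀ a b, 0 ≤ M a b := fun a b => dhnP_nonneg n hn3 m h0 hn1 hpos a b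
  have hstep : ∀ s, 0 < M s (nextS n s) := fun s => dhnP_step_pos n hn3 m h0 hn1 hpos s
  set top : Bool × Fin n := (true, ⟨n - 1, by omega⟩) with htop
  have hstay : 0 < M top top := dhnP_stay_pos n hn3 m h0 hn1 hpos
  have A : ∀ (d : ℕ) (s : Bool × Fin n), 0 < (M ^ d) s ((nextS n)^[d] s) := by
    intro d
    induction d with
    | zero =>
        intro s
        simp [Matrix.one_apply]
    | succ d ih =>
        intro s
        have h1 : 0 < (M ^ d) s ((nextS n)^[d] s) * M ((nextS n)^[d] s) (nextS n ((nextS n)^[d] s)) :=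
          mul_pos (ih s) (hstep _)
        have h2 := pow_apply_mul_le M hnn d 1 s ((nextS n)^[d] s) (nextS n ((nextS n)^[d] s))
        rw [pow_one] at h2
        rw [Function.iterate_succ_apply']
        exact lt_of_lt_of_le h1 h2
  have B : ∀ (t : ℕ), 0 < (M ^ t) top top := by
    intro t
    induction t with
    | zero => simp [Matrix.one_apply]
    | succ t ih =>
        have h2 := pow_apply_mul_le M hnn t 1 top top top
        rw [pow_one] at h2
        exact lt_of_lt_of_le (mul_pos ih hstay) h2
  have hpy := posS_lt n y
  have hpj := posS_lt n j'
  set d1 := 3 * n - 1 - posS n y with hd1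
  set d2 := posS n j' + n + 1 with hd2
  set t := 7 * n - d1 - d2 with ht
  have hsum : 7 * n = d1 + (t + d2) := by omega
  have hptop : posS n top = n - 1 := by simp [posS, htop]
  have e1 : (nextS n)^[d1] y = top := by
    conv_lhs => rw [← idxS_posS n hn0 y]
    rw [iter_nextS]
    have h1 : posS n y + d1 = (n - 1) + 2 * n := by omega
    rw [h1, idxS_period, ← hptop, idxS_posS]
  have e2 : (nextS n)^[d2] top = j' := by
    conv_lhs => rw [← idxS_posS n hn0 top]
    rw [iter_nextS, hptop]
    have h1 : (n - 1) + d2 = posS n j' + 2 * n := by omega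
    rw [h1, idxS_period, idxS_posS]
  have A1 : 0 < (M ^ d1) y top := by rw [← e1]; exact A d1 y
  have A2 : 0 < (M ^ d2) top j' := by rw [← e2]; exact A d2 top
  calc (0:ℝ) < (M ^ d1) y top * ((M ^ t) top top * (M ^ d2) top j') :=
        mul_pos A1 (mul_pos (B t) A2)
    _ ≤ (M ^ d1) y top * (M ^ (t + d2)) top j' :=
        mul_le_mul_of_nonneg_left (pow_apply_mul_le M hnn t d2 top top j') A1.le
    _ ≤ (M ^ (d1 + (t + d2))) y j' := pow_apply_mul_le M hnn d1 (t + d2) y top j'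
    _ = (M ^ (7 * n)) y j' := by rw [← hsum]
end

section
/- For every starting state y ∈ S, the probability that the Diaconis–Holmes–Neal sampler started at y visits the basepoint j̃ = (+1, j*) within the first 2n − 1 steps is at least ((n−1)/n)^{2n−1}; that is, Σ_{t=0}^{2n−1} P(X_t = j̃ and X_l ≠ j̃ for all l < t | X_0 = y) ≥ ((n−1)/n)^{2n−1}. -/
open scoped Classical

namespace DHNAux

/-! ### Generic finite-state machinery -/

section generic
variable {S : Type*} [Fintype S]

noncomputable def F (P : S → S → ℝ) (jt : S) : ℕ → S → ℝ
  | 0, s => if s = jt then 1 else 0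
  | h+1, s => if s = jt then 1 else ∑ s' : S, P s s' * F P jt h s'

noncomputable def T (P : S → S → ℝ) (jt : S) (t : ℕ) (y : S) : ℝ :=
  ∑ w : Fin (t + 1) → S,
    (if w 0 = y ∧ w (Fin.last t) = jt ∧
        (∀ l : Fin (t + 1), (l : ℕ) < t → w l ≠ jt)
     then ∏ i : Fin t, P (w i.castSucc) (w i.succ) else 0)

variable {P : S → S → ℝ} {jt : S}

lemma F_nonneg (hP : ∀ s t, 0 ≤ P s t) : ∀ h s, 0 ≤ F P jt h s := by
  intro h
  induction h with
  | zero => intro s; simp only [F]; split <;> norm_num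
  | succ h ih =>
    intro s
    simp only [F]
    split
    · norm_num
    · exact Finset.sum_nonneg fun s' _ => mul_nonneg (hP s s') (ih s')

lemma T_zero (y : S) : T P jt 0 y = if y = jt then 1 else 0 := by
  rw [T]
  rw [Fintype.sum_equiv (Equiv.funUnique (Fin 1) S)
    _ (fun a => if a = y ∧ a = jt then 1 else 0)]
  · by_cases h : y = jt
    · subst h; simp
    · rw [if_neg h]
      apply Finset.sum_eq_zero
      intro a _
      rw [if_neg]
      rintro ⟨rfl, h2⟩
      exact h h2
  · intro w
    simp [Fin.last, Equiv.funUnique]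

lemma T_jt (t : ℕ) : T P jt (t + 1) jt = 0 := by
  rw [T]
  apply Finset.sum_eq_zero
  intro w _
  rw [if_neg]
  rintro ⟨h0, hlast, hall⟩
  exact hall 0 (by simp) h0

lemma T_succ (t : ℕ) (y : S) (hy : y ≠ jt) :
    T P jt (t + 1) y = ∑ s' : S, P y s' * T P jt t s' := by
  have hcons_all : ∀ (a : S) (v : Fin (t+1) → S),
      (∀ l : Fin (t+2), (l:ℕ) < t+1 → (Fin.cons a v : Fin (t+2) → S) l ≠ jt) ↔
        (a ≠ jt ∧ ∀ l : Fin (t+1), (l:ℕ) < t → v l ≠ jt) := by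
    intro a v
    constructor
    · intro h
      refine ⟨by simpa using h 0 (by simp), fun l hl => by
        simpa using h l.succ (by simpa using Nat.succ_lt_succ hl)⟩
    · rintro ⟨h0, h1⟩ l hl
      induction l using Fin.cases with
      | zero => simpa using h0
      | succ i => simpa using h1 i (by simpa using hl)
  have hcons_prod : ∀ (a : S) (v : Fin (t+1) → S),
      ∏ i : Fin (t+1), P ((Fin.cons a v : Fin (t+2) → S) i.castSucc)
          ((Fin.cons a v : Fin (t+2) → S) i.succ)
        = P a (v 0) * ∏ i : Fin t, P (v i.castSucc) (v i.succ) := by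
    intro a v
    rw [Fin.prod_univ_succ]
    simp [← Fin.succ_castSucc]
  have hcons_last : ∀ (a : S) (v : Fin (t+1) → S),
      (Fin.cons a v : Fin (t+2) → S) (Fin.last (t+1)) = v (Fin.last t) := by
    intro a v
    rw [← Fin.succ_last, Fin.cons_succ]
  calc T P jt (t + 1) y
      = ∑ a : S, ∑ v : Fin (t+1) → S,
          (if (Fin.cons a v : Fin (t+2) → S) 0 = y ∧
              (Fin.cons a v : Fin (t+2) → S) (Fin.last (t+1)) = jt ∧
              (∀ l : Fin (t+2), (l:ℕ) < t+1 → (Fin.cons a v : Fin (t+2) → S) l ≠ jt)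
           then ∏ i : Fin (t+1), P ((Fin.cons a v : Fin (t+2) → S) i.castSucc)
              ((Fin.cons a v : Fin (t+2) → S) i.succ) else 0) := by
        rw [T, ← Equiv.sum_comp (Fin.consEquiv fun _ : Fin (t+2) => S),
          Fintype.sum_prod_type]
        rfl
    _ = ∑ v : Fin (t+1) → S,
          (if v (Fin.last t) = jt ∧ (∀ l : Fin (t+1), (l:ℕ) < t → v l ≠ jt)
           then P y (v 0) * ∏ i : Fin t, P (v i.castSucc) (v i.succ) else 0) := by
        rw [Finset.sum_eq_single y]
        · apply Finset.sum_congr rfl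
          intro v _
          by_cases hQ : v (Fin.last t) = jt ∧ (∀ l : Fin (t+1), (l:ℕ) < t → v l ≠ jt)
          · rw [if_pos hQ, if_pos, hcons_prod]
            refine ⟨rfl, ?_, ?_⟩
            · rw [hcons_last]; exact hQ.1
            · rw [hcons_all]; exact ⟨hy, hQ.2⟩
          · rw [if_neg hQ, if_neg]
            rintro ⟨h0, h1, h2⟩
            rw [hcons_last] at h1
            rw [hcons_all] at h2
            exact hQ ⟨h1, h2.2⟩
        · intro b _ hb
          apply Finset.sum_eq_zero
          intro v _
          rw [if_neg]
          rintro ⟨h0, -, -⟩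
          rw [Fin.cons_zero] at h0
          exact hb h0
        · intro h
          exact absurd (Finset.mem_univ y) h
    _ = ∑ v : Fin (t+1) → S, ∑ s' : S,
          (if v 0 = s' ∧ (v (Fin.last t) = jt ∧ (∀ l : Fin (t+1), (l:ℕ) < t → v l ≠ jt))
           then P y s' * ∏ i : Fin t, P (v i.castSucc) (v i.succ) else 0) := by
        apply Finset.sum_congr rfl
        intro v _
        rw [show (∑ s' : S,
            (if v 0 = s' ∧ (v (Fin.last t) = jt ∧ (∀ l : Fin (t+1), (l:ℕ) < t → v l ≠ jt))
             then P y s' * ∏ i : Fin t, P (v i.castSucc) (v i.succ) else 0)) =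
            (if (v (Fin.last t) = jt ∧ (∀ l : Fin (t+1), (l:ℕ) < t → v l ≠ jt))
             then P y (v 0) * ∏ i : Fin t, P (v i.castSucc) (v i.succ) else 0) from ?_]
        simp only [ite_and]
        rw [Finset.sum_ite_eq]
        simp
    _ = ∑ s' : S, P y s' * T P jt t s' := by
        rw [Finset.sum_comm]
        apply Finset.sum_congr rfl
        intro s' _
        rw [T, Finset.mul_sum]
        apply Finset.sum_congr rfl
        intro v _
        rw [mul_ite, mul_zero]

lemma sumT_eq_F : ∀ (h : ℕ) (y : S),
    (∑ t ∈ Finset.range (h + 1), T P jt t y) = F P jt h y := by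
  intro h
  induction h with
  | zero =>
    intro y
    rw [Finset.sum_range_one, T_zero]
    simp [F]
  | succ h ih =>
    intro y
    by_cases hy : y = jt
    · subst hy
      rw [Finset.sum_range_succ']
      simp [T_jt, T_zero, F]
    · rw [Finset.sum_range_succ', T_zero, if_neg hy, add_zero]
      calc ∑ t ∈ Finset.range (h + 1), T P jt (t + 1) y
          = ∑ t ∈ Finset.range (h + 1), ∑ s' : S, P y s' * T P jt t s' :=
            Finset.sum_congr rfl fun t _ => T_succ t y hy
        _ = ∑ s' : S, ∑ t ∈ Finset.range (h + 1), P y s' * T P jt t s' :=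
            Finset.sum_comm
        _ = ∑ s' : S, P y s' * F P jt h s' := by
            apply Finset.sum_congr rfl
            intro s' _
            rw [← Finset.mul_sum, ih s']
        _ = F P jt (h + 1) y := by
            simp only [F]
            rw [if_neg hy]

lemma F_step_single {h : ℕ} {c : ℝ} (hc : 0 ≤ c) (hP : ∀ u u', 0 ≤ P u u')
    {s s' : S} (hs : s ≠ jt) (hPs : P s s' = c) (hF' : c ^ h ≤ F P jt h s') :
    c ^ (h + 1) ≤ F P jt (h + 1) s := by
  have hFnn := F_nonneg (P := P) (jt := jt) hP h
  simp only [F]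
  rw [if_neg hs]
  have h1 : c ^ (h+1) ≤ P s s' * F P jt h s' := by
    rw [hPs, pow_succ']
    exact mul_le_mul_of_nonneg_left hF' hc
  exact h1.trans (Finset.single_le_sum
    (fun u _ => mul_nonneg (hP s u) (hFnn u)) (Finset.mem_univ s'))

lemma F_step_pair {h : ℕ} {c r : ℝ} (hc : 0 ≤ c) (hr0 : 0 ≤ r) (hr1 : r ≤ 1)
    (hP : ∀ u u', 0 ≤ P u u') {s s1 s2 : S} (hs : s ≠ jt) (hne : s1 ≠ s2)
    (hP1 : P s s1 = c * r) (hP2 : P s s2 = c * (1 - r))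
    (hF1 : c ^ h ≤ F P jt h s1) (hF2 : c ^ h ≤ F P jt h s2) :
    c ^ (h + 1) ≤ F P jt (h + 1) s := by
  have hFnn := F_nonneg (P := P) (jt := jt) hP h
  simp only [F]
  rw [if_neg hs]
  have hsum : P s s1 * F P jt h s1 + P s s2 * F P jt h s2
      ≤ ∑ u : S, P s u * F P jt h u := by
    have hpair := Finset.sum_pair (f := fun u => P s u * F P jt h u) hne
    rw [← hpair]
    exact Finset.sum_le_sum_of_subset_of_nonneg (Finset.subset_univ _)
      (fun u _ _ => mul_nonneg (hP s u) (hFnn u))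
  refine le_trans ?_ hsum
  rw [hP1, hP2, pow_succ']
  have hpow : 0 ≤ c ^ h := pow_nonneg hc h
  nlinarith [mul_le_mul_of_nonneg_left hF1 (mul_nonneg hc hr0),
    mul_le_mul_of_nonneg_left hF2 (mul_nonneg hc (by linarith : (0:ℝ) ≤ 1 - r))]

end generic

/-! ### Specific facts about the DHN kernel -/

section eval
variable {n : ℕ} {m : ℕ → ℝ}

lemma dhnP_eval_up (a : ℕ) (ha : a < n) (hb : a + 1 < n) :
    dhnP n m (true, ⟨a, ha⟩) (true, ⟨a+1, hb⟩)
      = (1 - 1/(n:ℝ)) * min 1 (m (a+1+1) / m (a+1)) := by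
  simp [dhnP, Fin.ext_iff]

lemma dhnP_eval_jump_t (a : ℕ) (ha : a < n) :
    dhnP n m (true, ⟨a, ha⟩) (false, ⟨a, ha⟩)
      = (1 - 1/(n:ℝ)) * (1 - min 1 (m (a+1+1) / m (a+1))) := by
  simp [dhnP, Fin.ext_iff]

lemma dhnP_eval_jump_f (a : ℕ) (ha : a < n) :
    dhnP n m (false, ⟨a, ha⟩) (true, ⟨a, ha⟩)
      = (1 - 1/(n:ℝ)) * (1 - min 1 (m a / m (a+1))) := by
  simp [dhnP, Fin.ext_iff]

lemma dhnP_eval_down (a : ℕ) (ha : a + 1 < n) (hb : a < n) :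
    dhnP n m (false, ⟨a+1, ha⟩) (false, ⟨a, hb⟩)
      = (1 - 1/(n:ℝ)) * min 1 (m (a+1) / m (a+1+1)) := by
  simp [dhnP, Fin.ext_iff]

lemma m_nonneg (hm0 : m 0 = 0) (hmtop : m (n + 1) = 0)
    (hpos : ∀ j, 1 ≤ j → j ≤ n → 0 < m j) :
    ∀ k, k ≤ n + 1 → 0 ≤ m k := by
  intro k hk
  rcases Nat.eq_zero_or_pos k with h | h
  · simp [h, hm0]
  rcases eq_or_lt_of_le hk with h2 | h2
  · simp [h2, hmtop]
  · exact (hpos k h (by omega)).le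

lemma theta_mem (hn : 1 ≤ n) : 0 ≤ 1 - 1/(n:ℝ) ∧ 1 - 1/(n:ℝ) ≤ 1 := by
  have h1 : (1:ℝ) ≤ n := by exact_mod_cast hn
  constructor
  · have : 1/(n:ℝ) ≤ 1 := by
      rw [div_le_one (by linarith)]; linarith
    linarith
  · have : 0 < 1/(n:ℝ) := by positivity
    linarith

lemma dhnP_nonneg (hn : 1 ≤ n) (hm0 : m 0 = 0) (hmtop : m (n + 1) = 0)
    (hpos : ∀ j, 1 ≤ j → j ≤ n → 0 < m j) (s t : Bool × Fin n) :
    0 ≤ dhnP n m s t := by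
  obtain ⟨hθ0, hθ1⟩ := theta_mem (n := n) hn
  have hθ0' : (0:ℝ) ≤ 1/(n:ℝ) := by positivity
  rcases s with ⟨ε, j⟩
  have hjlt : (j : ℕ) < n := j.isLt
  have hj : 0 < m ((j:ℕ) + 1) := hpos _ (by omega) (by omega)
  have hA0 : 0 ≤ min 1 (m ((j:ℕ)+1+1) / m ((j:ℕ)+1)) :=
    le_min one_pos.le (div_nonneg (m_nonneg hm0 hmtop hpos _ (by omega)) hj.le)
  have hA1 : min 1 (m ((j:ℕ)+1+1) / m ((j:ℕ)+1)) ≤ 1 := min_le_left _ _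
  have hB0 : 0 ≤ min 1 (m ((j:ℕ)+1-1) / m ((j:ℕ)+1)) :=
    le_min one_pos.le (div_nonneg (m_nonneg hm0 hmtop hpos _ (by omega)) hj.le)
  have hB1 : min 1 (m ((j:ℕ)+1-1) / m ((j:ℕ)+1)) ≤ 1 := min_le_left _ _
  have key : ∀ (c : Prop) (inst : Decidable c) (x : ℝ), 0 ≤ x → 0 ≤ @ite ℝ c inst x 0 := by
    intro c inst x hx
    split <;> simp [hx]
  cases ε <;>
  · simp only [dhnP, if_true, if_false, Bool.false_eq_true, ite_true, ite_false]
    refine add_nonneg (add_nonneg (add_nonneg ?_ ?_) ?_) ?_ <;>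
      · refine key _ _ _ ?_
        nlinarith [hA0, hA1, hB0, hB1]

end eval

/-! ### The distance function along the cycle -/

def dd (n jstar : ℕ) (s : Bool × Fin n) : ℕ :=
  cond s.1
    (if (s.2 : ℕ) + 1 ≤ jstar then jstar - ((s.2 : ℕ) + 1)
      else 2 * n + jstar - ((s.2 : ℕ) + 1))
    ((s.2 : ℕ) + jstar)

lemma dd_le {n jstar : ℕ} (hj2 : jstar ≤ n) (y : Bool × Fin n) :
    dd n jstar y ≤ 2 * n - 1 := by
  obtain ⟨ε, ⟨a, ha⟩⟩ := y
  cases ε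
  · simp only [dd, cond_false]; omega
  · simp only [dd, cond_true]; split_ifs <;> omega

lemma F_lower {n : ℕ} {m : ℕ → ℝ} (hn : 3 ≤ n) (hm0 : m 0 = 0) (hmtop : m (n + 1) = 0)
    (hpos : ∀ j, 1 ≤ j → j ≤ n → 0 < m j)
    (jstar : ℕ) (hj1 : 1 ≤ jstar) (hj2 : jstar ≤ n)
    (hup : ∀ j, 1 ≤ j → j < jstar → m j ≤ m (j + 1))
    (hdown : ∀ j, jstar ≤ j → j < n → m (j + 1) ≤ m j)
    (jt : Bool × Fin n) (hjt : jt = (true, ⟨jstar - 1, Nat.lt_of_lt_of_le (Nat.sub_lt hj1 Nat.one_pos) hj2⟩)) :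
    ∀ (h : ℕ) (s : Bool × Fin n), dd n jstar s ≤ h →
      (1 - 1/(n:ℝ)) ^ h ≤ F (dhnP n m) jt h s := by
  have hn1 : 1 ≤ n := by omega
  obtain ⟨hθ0, hθ1⟩ := theta_mem (n := n) hn1
  have hP := dhnP_nonneg hn1 hm0 hmtop hpos
  intro h
  induction h with
  | zero =>
    intro s hds
    obtain ⟨ε, ⟨a, ha⟩⟩ := s
    cases ε
    · exfalso; simp only [dd, cond_false] at hds; omega
    · have ha1 : a + 1 = jstar := by
        simp only [dd, cond_true] at hds; split_ifs at hds <;> omega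
      have hseq : ((true, ⟨a, ha⟩) : Bool × Fin n) = jt := by
        rw [hjt]
        simp only [Prod.mk.injEq, Fin.mk.injEq]
        exact ⟨trivial, by omega⟩
      rw [hseq]
      have hF1 : F (dhnP n m) jt 0 jt = 1 := by simp [F]
      rw [hF1]
      norm_num
  | succ h ih =>
    intro s hds
    by_cases hsjt : s = jt
    · rw [hsjt]
      have hF1 : F (dhnP n m) jt (h + 1) jt = 1 := by simp [F]
      rw [hF1]
      exact pow_le_one₀ hθ0 hθ1
    · obtain ⟨ε, ⟨a, ha⟩⟩ := s
      cases ε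
      · -- ε = false : going down
        by_cases h1 : jstar ≤ a
        · -- shift down with full probability
          obtain ⟨a', rfl⟩ : ∃ a', a = a' + 1 := ⟨a - 1, by omega⟩
          have hM : m (a'+1+1) ≤ m (a'+1) := hdown (a'+1) (by omega) (by omega)
          have hr : min 1 (m (a'+1) / m (a'+1+1)) = 1 :=
            min_eq_left ((one_le_div (hpos (a'+1+1) (by omega) (by omega))).mpr hM)
          have hPs : dhnP n m (false, ⟨a'+1, ha⟩) (false, ⟨a', by omega⟩)
              = 1 - 1/(n:ℝ) := by
            rw [dhnP_eval_down, hr, mul_one]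
          refine F_step_single hθ0 hP hsjt hPs (ih _ ?_)
          simp only [dd, cond_true, cond_false] at hds ⊢
          omega
        · rcases Nat.eq_zero_or_pos a with rfl | hapos
          · -- jump from (−1, 1) with full probability
            have hmr : min 1 (m 0 / m (0+1)) = 0 := by
              rw [hm0, zero_div]
              exact min_eq_right zero_le_one
            have hPs : dhnP n m (false, ⟨0, ha⟩) (true, ⟨0, ha⟩) = 1 - 1/(n:ℝ) := by
              rw [dhnP_eval_jump_f, hmr]; ring
            refine F_step_single hθ0 hP hsjt hPs (ih _ ?_)
            simp only [dd, cond_true, cond_false] at hds ⊢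
            split_ifs <;> omega
          · -- shift down / jump pair
            obtain ⟨a', rfl⟩ : ∃ a', a = a' + 1 := ⟨a - 1, by omega⟩
            have hr0 : 0 ≤ min 1 (m (a'+1) / m (a'+1+1)) :=
              le_min one_pos.le (div_nonneg (hpos (a'+1) (by omega) (by omega)).le
                (hpos (a'+1+1) (by omega) (by omega)).le)
            have hr1 : min 1 (m (a'+1) / m (a'+1+1)) ≤ 1 := min_le_left _ _
            have hne : ((false, ⟨a', by omega⟩) : Bool × Fin n) ≠ (true, ⟨a'+1, ha⟩) := by
              simp
            refine F_step_pair hθ0 hr0 hr1 hP hsjt hne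
              (dhnP_eval_down a' ha (by omega)) (dhnP_eval_jump_f (a'+1) ha)
              (ih _ ?_) (ih _ ?_)
            · simp only [dd, cond_true, cond_false] at hds ⊢
              omega
            · simp only [dd, cond_true, cond_false] at hds ⊢
              split_ifs <;> omega
      · -- ε = true : going up
        rcases lt_trichotomy (a + 1) jstar with h1 | h1 | h1
        · -- below the mode: shift up with full probability
          have hb : a + 1 < n := by omega
          have hM : m (a+1) ≤ m (a+1+1) := hup (a+1) (by omega) h1
          have hr : min 1 (m (a+1+1) / m (a+1)) = 1 :=
            min_eq_left ((one_le_div (hpos (a+1) (by omega) (by omega))).mpr hM)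
          have hPs : dhnP n m (true, ⟨a, ha⟩) (true, ⟨a+1, hb⟩) = 1 - 1/(n:ℝ) := by
            rw [dhnP_eval_up, hr, mul_one]
          refine F_step_single hθ0 hP hsjt hPs (ih _ ?_)
          simp only [dd, cond_true, cond_false] at hds ⊢
          split_ifs at hds ⊢ <;> omega
        · -- at the mode: contradiction with s ≠ jt
          exfalso
          apply hsjt
          rw [hjt]
          simp only [Prod.mk.injEq, Fin.mk.injEq]
          exact ⟨trivial, by omega⟩
        · by_cases h3 : a + 1 < n
          · -- shift up / jump pair
            have hr0 : 0 ≤ min 1 (m (a+1+1) / m (a+1)) :=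
              le_min one_pos.le (div_nonneg (m_nonneg hm0 hmtop hpos _ (by omega))
                (hpos (a+1) (by omega) (by omega)).le)
            have hr1 : min 1 (m (a+1+1) / m (a+1)) ≤ 1 := min_le_left _ _
            have hne : ((true, ⟨a+1, h3⟩) : Bool × Fin n) ≠ (false, ⟨a, ha⟩) := by
              simp
            refine F_step_pair hθ0 hr0 hr1 hP hsjt hne
              (dhnP_eval_up a ha h3) (dhnP_eval_jump_t a ha)
              (ih _ ?_) (ih _ ?_)
            · simp only [dd, cond_true, cond_false] at hds ⊢
              split_ifs at hds ⊢ <;> omega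
            · simp only [dd, cond_true, cond_false] at hds ⊢
              split_ifs at hds <;> omega
          · -- at the top: jump with full probability
            have han : a + 1 = n := by omega
            have hmr : min 1 (m (a+1+1) / m (a+1)) = 0 := by
              rw [show a+1+1 = n+1 by omega, hmtop, zero_div]
              exact min_eq_right zero_le_one
            have hPs : dhnP n m (true, ⟨a, ha⟩) (false, ⟨a, ha⟩) = 1 - 1/(n:ℝ) := by
              rw [dhnP_eval_jump_t, hmr]; ring
            refine F_step_single hθ0 hP hsjt hPs (ih _ ?_)
            simp only [dd, cond_true, cond_false] at hds ⊢
            split_ifs at hds <;> omega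

end DHNAux

/-- from any starting state `y`, the probability of hitting the
basepoint `j̃ = (+1, j*)` within the first `2n - 1` steps is at least
`((n-1)/n)^(2n-1)`.  The probability is written as the sum, over the first
hitting time `t` and over all trajectories of length `t` from `y` hitting `j̃`
first at time `t`, of the product of the one-step transition probabilities. -/
theorem dhn_hit_basepoint (n : ℕ) (hn : 3 ≤ n) (hodd : Odd n)
    (m : ℕ → ℝ) (hm0 : m 0 = 0) (hmtop : m (n + 1) = 0)
    (hpos : ∀ j, 1 ≤ j → j ≤ n → 0 < m j)
    (jstar : ℕ) (hj1 : 1 ≤ jstar) (hj2 : jstar ≤ n)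
    (hup : ∀ j, 1 ≤ j → j < jstar → m j ≤ m (j + 1))
    (hdown : ∀ j, jstar ≤ j → j < n → m (j + 1) ≤ m j)
    (jt : Bool × Fin n) (hjt : jt = (true, ⟨jstar - 1, by omega⟩))
    (y : Bool × Fin n) :
    ((n - 1 : ℝ) / n) ^ (2 * n - 1) ≤
      ∑ t ∈ Finset.range (2 * n),
        ∑ w : Fin (t + 1) → Bool × Fin n,
          (if w 0 = y ∧ w (Fin.last t) = jt ∧
              (∀ l : Fin (t + 1), (l : ℕ) < t → w l ≠ jt)
           then ∏ i : Fin t, dhnP n m (w i.castSucc) (w i.succ) else 0) := by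
  have hncast : ((n:ℝ) - 1) / n = 1 - 1/(n:ℝ) := by
    have hn0 : (n:ℝ) ≠ 0 := by
      have : (0:ℝ) < n := by exact_mod_cast (by omega : 0 < n)
      linarith
    field_simp
  rw [hncast]
  calc (1 - 1/(n:ℝ)) ^ (2 * n - 1)
      ≤ DHNAux.F (dhnP n m) jt (2 * n - 1) y :=
        DHNAux.F_lower hn hm0 hmtop hpos jstar hj1 hj2 hup hdown jt hjt
          (2 * n - 1) y (DHNAux.dd_le hj2 y)
    _ = ∑ t ∈ Finset.range ((2 * n - 1) + 1), DHNAux.T (dhnP n m) jt t y :=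
        (DHNAux.sumT_eq_F _ _).symm
    _ = ∑ t ∈ Finset.range (2 * n),
          ∑ w : Fin (t + 1) → Bool × Fin n,
            (if w 0 = y ∧ w (Fin.last t) = jt ∧
                (∀ l : Fin (t + 1), (l : ℕ) < t → w l ≠ jt)
             then ∏ i : Fin t, dhnP n m (w i.castSucc) (w i.succ) else 0) := by
        rw [show (2 * n - 1) + 1 = 2 * n from by omega]
        apply Finset.sum_congr rfl
        intro t _
        rw [DHNAux.T]
        apply Finset.sum_congr rfl
        intro w _
        congr
end
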